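/- Functional progress with cubic step-size and cut negative spectrum: let f : E → ℝ be twice continuously differentiable with L-Lipschitz-continuous Hessian (L > 0). Fix x ∈ E and suppose ∇²f(x) = A₊ − A₋, where A₊ and A₋ are symmetric positive semidefinite linear maps. Let H be a symmetric positive semidefinite linear map with ‖A₊ − H‖ ≤ β for some β ≥ 0, let η ≥ β, and let x⁺ ∈ E satisfy ∇f(x) + (H + αI)(x⁺ − x) = 0 with α = (L/2)·r + η, where r := ‖x⁺ − x‖. Then f(x) − f(x⁺) ≥ (L/3)·r³ + (η/2)·r². -/

import Mathlib

open scoped RealInnerProductSpace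
open Real Set

def IsSymmPSD {n : ℕ} (H : EuclideanSpace ℝ (Fin n) →L[ℝ] EuclideanSpace ℝ (Fin n)) : Prop :=
  (∀ u v, ⟪H u, v⟫ = ⟪u, H v⟫) ∧ ∀ u, 0 ≤ ⟪H u, u⟫

noncomputable def hess {n : ℕ} (f : EuclideanSpace ℝ (Fin n) → ℝ)
    (x : EuclideanSpace ℝ (Fin n)) :
    EuclideanSpace ℝ (Fin n) →L[ℝ] EuclideanSpace ℝ (Fin n) :=
  fderiv ℝ (gradient f) x

/-! Integrating the Lipschitz bound on the Hessian twice along the segment from `x` to `x⁺`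
gives the cubic Taylor bound `f x⁺ ≤ f x + ⟪∇f x, s⟫ + ½⟪∇²f(x) s, s⟫ + (L/6)‖s‖³` with
`s = x⁺ - x`. The step equation gives `⟪∇f x, s⟫ = -⟪H s, s⟫ - α‖s‖²`, and dropping `A₋`
gives `⟪∇²f(x) s, s⟫ ≤ ⟪A₊ s, s⟫ ≤ ⟪H s, s⟫ + β‖s‖²`. Substituting, the `H`-terms add up to
`-½⟪H s, s⟫ ≤ 0`, and `α = (L/2)‖s‖ + η` with `β ≤ η` leaves `-(L/3)‖s‖³ - (η/2)‖s‖²`. -/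

theorem norm_le_of_norm_hasDerivAt_le_mul_pow {F : Type*} [NormedAddCommGroup F]
    [NormedSpace ℝ F] {φ φ' : ℝ → F} {C : ℝ} {k : ℕ}
    (hφ : ∀ t, HasDerivAt φ (φ' t) t) (h0 : φ 0 = 0)
    (hφ' : ∀ t ∈ Ico (0 : ℝ) 1, ‖φ' t‖ ≤ C * t ^ k) {t : ℝ} (ht : t ∈ Icc (0 : ℝ) 1) :
    ‖φ t‖ ≤ C * t ^ (k + 1) / (k + 1) := by
  have hB : ∀ t : ℝ, HasDerivAt (fun t => C * t ^ (k + 1) / (k + 1)) (C * t ^ k) t := by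
    intro t
    refine (((hasDerivAt_pow (k + 1) t).const_mul C).div_const ((k : ℝ) + 1)).congr_deriv ?_
    push_cast
    field_simp
  exact image_norm_le_of_norm_deriv_right_le_deriv_boundary
    (fun t _ => (hφ t).continuousAt.continuousWithinAt) (fun t _ => (hφ t).hasDerivWithinAt)
    (by simp [h0]) hB hφ' ht

theorem hasDerivAt_add_smul {E : Type*} [NormedAddCommGroup E] [NormedSpace ℝ E] (x s : E)
    (t : ℝ) : HasDerivAt (fun t : ℝ => x + t • s) s t := by
  simpa using ((hasDerivAt_id t).smul_const s).const_add x

theorem norm_sub_sub_fderiv_apply_le {E F : Type*} [NormedAddCommGroup E] [NormedSpace ℝ E]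
    [NormedAddCommGroup F] [NormedSpace ℝ F] {g : E → F} {L : ℝ} {x : E}
    (hg : Differentiable ℝ g) (hLip : ∀ y, ‖fderiv ℝ g y - fderiv ℝ g x‖ ≤ L * ‖y - x‖) (s : E) :
    ‖g (x + s) - g x - fderiv ℝ g x s‖ ≤ L / 2 * ‖s‖ ^ 2 := by
  have hφ : ∀ t : ℝ, HasDerivAt (fun t : ℝ => g (x + t • s) - g x - t • fderiv ℝ g x s)
      (fderiv ℝ g (x + t • s) s - fderiv ℝ g x s) t := fun t => by
    have hgt := (hg (x + t • s)).hasFDerivAt.comp_hasDerivAt t (hasDerivAt_add_smul x s t)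
    exact ((hgt.sub_const (g x)).sub ((hasDerivAt_id t).smul_const _)).congr_deriv (by simp)
  have hbound : ∀ t ∈ Ico (0 : ℝ) 1,
      ‖fderiv ℝ g (x + t • s) s - fderiv ℝ g x s‖ ≤ L * ‖s‖ ^ 2 * t ^ 1 := by
    rintro t ⟨ht, -⟩
    calc ‖fderiv ℝ g (x + t • s) s - fderiv ℝ g x s‖
        = ‖(fderiv ℝ g (x + t • s) - fderiv ℝ g x) s‖ := rfl
      _ ≤ ‖fderiv ℝ g (x + t • s) - fderiv ℝ g x‖ * ‖s‖ := ContinuousLinearMap.le_opNorm _ _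
      _ ≤ L * ‖t • s‖ * ‖s‖ := by gcongr; simpa using hLip (x + t • s)
      _ = L * ‖s‖ ^ 2 * t ^ 1 := by rw [norm_smul, Real.norm_of_nonneg ht]; ring
  have := norm_le_of_norm_hasDerivAt_le_mul_pow hφ (by simp) hbound (right_mem_Icc.2 zero_le_one)
  simp only [one_smul, one_pow, mul_one] at this
  exact this.trans_eq (by push_cast; ring)

section HilbertSpace

variable {E : Type*} [NormedAddCommGroup E] [InnerProductSpace ℝ E]

theorem real_inner_apply_self_le_opNorm_mul_sq (T : E →L[ℝ] E) (s : E) :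
    ⟪T s, s⟫ ≤ ‖T‖ * ‖s‖ ^ 2 :=
  calc ⟪T s, s⟫ ≤ ‖T s‖ * ‖s‖ := real_inner_le_norm _ _
    _ ≤ ‖T‖ * ‖s‖ * ‖s‖ := by gcongr; exact T.le_opNorm s
    _ = ‖T‖ * ‖s‖ ^ 2 := by ring

variable [CompleteSpace E]

theorem ContDiff.gradient {f : E → ℝ} {n : WithTop ℕ∞} (hf : ContDiff ℝ (n + 1) f) :
    ContDiff ℝ n (gradient f) :=
  (InnerProductSpace.toDual ℝ E).symm.contDiff.comp (hf.fderiv_right le_rfl)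

noncomputable def quadraticModel (f : E → ℝ) (x s : E) : ℝ :=
  f x + ⟪gradient f x, s⟫ + 1 / 2 * ⟪fderiv ℝ (gradient f) x s, s⟫

theorem abs_sub_quadraticModel_le {f : E → ℝ} {L : ℝ} {x : E} (hf : Differentiable ℝ f)
    (hgf : Differentiable ℝ (gradient f))
    (hLip : ∀ y, ‖fderiv ℝ (gradient f) y - fderiv ℝ (gradient f) x‖ ≤ L * ‖y - x‖) (s : E) :
    |f (x + s) - quadraticModel f x s| ≤ L / 6 * ‖s‖ ^ 3 := by
  set D := fderiv ℝ (gradient f) x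
  have hφ : ∀ t : ℝ, HasDerivAt
      (fun t : ℝ => f (x + t • s) - (f x + t * ⟪gradient f x, s⟫ + t ^ 2 / 2 * ⟪D s, s⟫))
      ⟪gradient f (x + t • s) - gradient f x - D (t • s), s⟫ t := fun t => by
    have hft := (hf (x + t • s)).hasGradientAt.hasFDerivAt.comp_hasDerivAt t (hasDerivAt_add_smul x s t)
    have hmodel := (((hasDerivAt_id t).mul_const ⟪gradient f x, s⟫).const_add (f x)).add
      (((hasDerivAt_pow 2 t).div_const 2).mul_const ⟪D s, s⟫)
    refine (hft.sub hmodel).congr_deriv ?_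
    simp only [toDual_gradient, inner_gradient_left, map_smul, inner_sub_left,
      real_inner_smul_left]
    ring
  have hbound : ∀ t ∈ Ico (0 : ℝ) 1,
      ‖⟪gradient f (x + t • s) - gradient f x - D (t • s), s⟫‖ ≤ L / 2 * ‖s‖ ^ 3 * t ^ 2 := by
    rintro t ⟨ht, -⟩
    calc ‖⟪gradient f (x + t • s) - gradient f x - D (t • s), s⟫‖
        ≤ ‖gradient f (x + t • s) - gradient f x - D (t • s)‖ * ‖s‖ := norm_inner_le_norm _ _
      _ ≤ L / 2 * ‖t • s‖ ^ 2 * ‖s‖ := by gcongr; exact norm_sub_sub_fderiv_apply_le hgf hLip _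
      _ = L / 2 * ‖s‖ ^ 3 * t ^ 2 := by rw [norm_smul, Real.norm_of_nonneg ht]; ring
  have := norm_le_of_norm_hasDerivAt_le_mul_pow hφ (by simp) hbound (right_mem_Icc.2 zero_le_one)
  simp only [one_smul, one_mul, one_pow, Real.norm_eq_abs] at this
  rw [quadraticModel]
  exact this.trans_eq (by push_cast; ring)

end HilbertSpace

theorem cubic_step_functional_progress_general {n : ℕ}
    (f : EuclideanSpace ℝ (Fin n) → ℝ) (hf : ContDiff ℝ 2 f)
    (L : ℝ)
    (hLip : ∀ x y, ‖hess f x - hess f y‖ ≤ L * ‖x - y‖)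
    (x xp : EuclideanSpace ℝ (Fin n))
    (Ap Am H : EuclideanSpace ℝ (Fin n) →L[ℝ] EuclideanSpace ℝ (Fin n))
    (hAm : IsSymmPSD Am)
    (hdecomp : hess f x = Ap - Am)
    (hH : IsSymmPSD H)
    (β : ℝ) (hHerr : ‖Ap - H‖ ≤ β)
    (η : ℝ) (hη : β ≤ η)
    (α : ℝ) (hα : α = L / 2 * ‖xp - x‖ + η)
    (hstep : gradient f x + H (xp - x) + α • (xp - x) = 0) :
    L / 3 * ‖xp - x‖ ^ 3 + η / 2 * ‖xp - x‖ ^ 2 ≤ f x - f xp := by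
  set s := xp - x
  have hmodel : f xp ≤ quadraticModel f x s + L / 6 * ‖s‖ ^ 3 := by
    have hgf : Differentiable ℝ (gradient f) := (hf.gradient (n := 1)).differentiable one_ne_zero
    have := abs_sub_quadraticModel_le (hf.differentiable two_ne_zero) hgf (hLip · x) s
    rw [add_sub_cancel] at this
    linarith [(abs_le.1 this).2]
  have hslope : ⟪gradient f x, s⟫ = -⟪H s, s⟫ - α * ‖s‖ ^ 2 := by
    have := congrArg (⟪·, s⟫) hstep
    simp only [inner_add_left, inner_zero_left, real_inner_smul_left,
      real_inner_self_eq_norm_sq] at this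
    linarith
  have hcurv : ⟪hess f x s, s⟫ ≤ ⟪H s, s⟫ + β * ‖s‖ ^ 2 := by
    have hApH := real_inner_apply_self_le_opNorm_mul_sq (Ap - H) s
    rw [hdecomp]
    simp only [sub_apply, inner_sub_left] at hApH ⊢
    linarith [hAm.2 s, mul_le_mul_of_nonneg_right hHerr (sq_nonneg ‖s‖)]
  rw [quadraticModel, ← hess] at hmodel
  rw [hα] at hslope
  linarith [hH.2 s, mul_le_mul_of_nonneg_right hη (sq_nonneg ‖s‖)]

/-- Functional progress with cubic step-size and cut negative spectrum: if
`∇²f(x) = A₊ − A₋` with `A₊, A₋` symmetric PSD, `‖A₊ − H‖ ≤ β ≤ η`, and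
`∇f(x) + (H + αI)(x⁺ − x) = 0` with `α = (L/2)r + η` and `r = ‖x⁺ − x‖`, then
`f(x) − f(x⁺) ≥ (L/3)r³ + (η/2)r²`. -/
theorem cubic_step_functional_progress {n : ℕ}
    (f : EuclideanSpace ℝ (Fin n) → ℝ) (hf : ContDiff ℝ 2 f)
    (L : ℝ) (hL : 0 < L)
    (hLip : ∀ x y, ‖hess f x - hess f y‖ ≤ L * ‖x - y‖)
    (x xp : EuclideanSpace ℝ (Fin n))
    (Ap Am H : EuclideanSpace ℝ (Fin n) →L[ℝ] EuclideanSpace ℝ (Fin n))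
    (hAp : IsSymmPSD Ap) (hAm : IsSymmPSD Am)
    (hdecomp : hess f x = Ap - Am)
    (hH : IsSymmPSD H)
    (β : ℝ) (hβ : 0 ≤ β) (hHerr : ‖Ap - H‖ ≤ β)
    (η : ℝ) (hη : β ≤ η)
    (α : ℝ) (hα : α = L / 2 * ‖xp - x‖ + η)
    (hstep : gradient f x + H (xp - x) + α • (xp - x) = 0) :
    L / 3 * ‖xp - x‖ ^ 3 + η / 2 * ‖xp - x‖ ^ 2 ≤ f x - f xp :=
  cubic_step_functional_progress_general f hf L hLip x xp Ap Am H hAm hdecomp hH β hHerr η hη α hα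
    hstep
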